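/- For every n ∈ ℕ with n ≥ 2, the Euler numbers and Lucas numbers satisfy E_n − (L_{n+1} − (7/2)·L_n) = Σ_{k=2}^{n} (E_k − 3·E_{k−1} + 5·Σ_{s=0}^{k−2} (−1)^{k−s}·2^{k−s−2}·E_s)·L_{n−k+1}. -/

import Mathlib

noncomputable section

/-- `Eu x k` is the Euler polynomial `E_k(x)`, characterized by the generating function
`(2/(e^z+1)) e^{xz} = Σ_k E_k(x) z^k / k!` for `|z| < π`. -/
def IsEulerFamily (Eu : ℝ → ℕ → ℝ) : Prop :=
  ∀ x z : ℝ, |z| < Real.pi →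
    HasSum (fun k : ℕ => Eu x k * z ^ k / (Nat.factorial k : ℝ))
      (2 / (Real.exp z + 1) * Real.exp (x * z))

/-- The Lucas sequence: `L_1 = 1`, `L_2 = 3`, `L_{m+2} = L_{m+1} + L_m` (so `L_0 = 2`). -/
def lucasSeq : ℕ → ℕ
  | 0 => 2
  | 1 => 1
  | m + 2 => lucasSeq (m + 1) + lucasSeq m

/-!
Only `E_0 = 1` and `E_1 = -1/2` enter, read off the generating function and its derivative at
`z = 0`. Writing `a_k` for the bracketed coefficient, the geometric inner sums telescope to
`a_{k+1} + 2 a_k = E_{k+1} - E_k - E_{k-1}`. By the Lucas recurrence the convolution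
`T_n = Σ a_k L_{n-k+1}` satisfies `T_{n+2} = T_{n+1} + T_n + a_{n+2} + 2 a_{n+1}` (the top terms
carry `L_2 = 3` and `L_1 = 1`), so `T_n` and `E_n - L_{n+1} + 7/2 L_n` obey the same second-order
recurrence and agree at `n = 1, 2`.
-/

open Finset NNReal

theorem hasDerivAt_zero_of_hasSum_pow {a : ℕ → ℝ} {f : ℝ → ℝ} {r : ℝ≥0} (hr : 0 < r)
    (hf : ∀ z : ℝ, |z| < r → HasSum (fun k => a k * z ^ k) (f z)) :
    HasDerivAt f (a 1) 0 := by
  set p := FormalMultilinearSeries.ofScalars ℝ a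
  have hr2 : |((r / 2 : ℝ≥0) : ℝ)| < r := by
    rw [NNReal.abs_eq]
    exact_mod_cast NNReal.half_lt_self hr.ne'
  have hradius : ((r / 2 : ℝ≥0) : ENNReal) ≤ p.radius := by
    refine p.le_radius_of_summable_norm ((hf _ hr2).summable.norm.congr fun k => ?_)
    simp [p, norm_mul]
  have hball : HasFPowerSeriesOnBall f p 0 (r / 2 : ℝ≥0) := by
    refine ⟨hradius, by simpa using hr.ne', fun {y} hy => ?_⟩
    rw [Metric.mem_eball, edist_zero_right, enorm_lt_coe] at hy
    have hy : |y| < r := by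
      rw [← Real.norm_eq_abs, ← coe_nnnorm]
      exact_mod_cast hy.trans_le (half_le_self r)
    simpa [p, FormalMultilinearSeries.ofScalars_apply_eq, mul_comm] using hf y hy
  simpa [p, FormalMultilinearSeries.ofScalars_apply_eq] using hball.hasFPowerSeriesAt.hasDerivAt

namespace IsEulerFamily

variable {Eu : ℝ → ℕ → ℝ}

theorem apply_zero (hEu : IsEulerFamily Eu) (x : ℝ) : Eu x 0 = 1 := by
  have h := hEu x 0 (by simpa using Real.pi_pos)
  have h0 := hasSum_single (f := fun k : ℕ => Eu x k * (0 : ℝ) ^ k / k.factorial) 0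
    fun k hk => by simp [zero_pow hk]
  norm_num at h h0
  simpa using (h.unique h0).symm

theorem apply_one (hEu : IsEulerFamily Eu) (x : ℝ) : Eu x 1 = x - 1 / 2 := by
  have hseries := hasDerivAt_zero_of_hasSum_pow (a := fun k => Eu x k / k.factorial)
    (f := fun z => 2 / (Real.exp z + 1) * Real.exp (x * z)) (r := NNReal.pi) NNReal.pi_pos
    fun z hz => by simpa [div_mul_eq_mul_div] using hEu x z hz
  have hdiff : HasDerivAt (fun z => 2 / (Real.exp z + 1) * Real.exp (x * z)) (x - 1 / 2) 0 := by
    have hquot : HasDerivAt (fun z => 2 / (Real.exp z + 1)) (-1 / 2) 0 := by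
      refine ((hasDerivAt_const (0 : ℝ) (2 : ℝ)).fun_div
        ((Real.hasDerivAt_exp 0).add_const 1) (by positivity)).congr_deriv ?_
      norm_num
    refine (hquot.fun_mul ((hasDerivAt_id (0 : ℝ)).const_mul x).exp).congr_deriv ?_
    norm_num
    ring
  simpa using hseries.unique hdiff

end IsEulerFamily

theorem lucasSeq_add_two (m : ℕ) :
    (lucasSeq (m + 2) : ℝ) = lucasSeq (m + 1) + lucasSeq m := by
  simp [lucasSeq]

def lucasConv (a : ℕ → ℝ) (n : ℕ) : ℝ :=
  ∑ k ∈ Icc 2 n, a k * lucasSeq (n - k + 1)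

theorem lucasConv_add_three (a : ℕ → ℝ) (n : ℕ) :
    lucasConv a (n + 3)
      = lucasConv a (n + 2) + lucasConv a (n + 1) + a (n + 3) + 2 * a (n + 2) := by
  have hmid : ∑ k ∈ Icc 2 (n + 1), a k * lucasSeq (n + 3 - k + 1)
      = ∑ k ∈ Icc 2 (n + 1), a k * lucasSeq (n + 2 - k + 1) + lucasConv a (n + 1) := by
    rw [lucasConv, ← sum_add_distrib]
    refine sum_congr rfl fun k hk => ?_
    have hkn := (mem_Icc.mp hk).2
    rw [show n + 3 - k + 1 = n + 1 - k + 1 + 2 by omega,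
      show n + 2 - k + 1 = n + 1 - k + 1 + 1 by omega, lucasSeq_add_two]
    ring
  have htop3 : lucasConv a (n + 3) = ∑ k ∈ Icc 2 (n + 1), a k * lucasSeq (n + 3 - k + 1)
      + a (n + 2) * lucasSeq 2 + a (n + 3) * lucasSeq 1 := by
    rw [lucasConv, sum_Icc_succ_top (by omega), sum_Icc_succ_top (by omega)]
    simp
  have htop2 : lucasConv a (n + 2) = ∑ k ∈ Icc 2 (n + 1), a k * lucasSeq (n + 2 - k + 1)
      + a (n + 2) * lucasSeq 1 := by
    rw [lucasConv, sum_Icc_succ_top (by omega)]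
    simp
  rw [htop3, htop2, hmid]
  norm_num [lucasSeq]
  ring

def eulerLucasCoeff (E : ℕ → ℝ) (k : ℕ) : ℝ :=
  E k - 3 * E (k - 1) + 5 * ∑ s ∈ Icc 0 (k - 2), (-1 : ℝ) ^ (k - s) * 2 ^ (k - s - 2) * E s

-- Only from index 2 on: below that the truncated subtractions in `eulerLucasCoeff` give junk.
theorem eulerLucasCoeff_add_three (E : ℕ → ℝ) (n : ℕ) :
    eulerLucasCoeff E (n + 3) + 2 * eulerLucasCoeff E (n + 2)
      = E (n + 3) - E (n + 2) - E (n + 1) := by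
  have hsum : ∑ s ∈ Icc 0 (n + 1), (-1 : ℝ) ^ (n + 3 - s) * 2 ^ (n + 3 - s - 2) * E s
      = E (n + 1) - 2 * ∑ s ∈ Icc 0 n, (-1 : ℝ) ^ (n + 2 - s) * 2 ^ (n + 2 - s - 2) * E s := by
    rw [sum_Icc_succ_top (Nat.zero_le _), mul_sum, show n + 3 - (n + 1) = 2 by omega]
    have hterm : ∀ s ∈ Icc 0 n, (-1 : ℝ) ^ (n + 3 - s) * 2 ^ (n + 3 - s - 2) * E s
        = -(2 * ((-1 : ℝ) ^ (n + 2 - s) * 2 ^ (n + 2 - s - 2) * E s)) := by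
      intro s hs
      obtain ⟨j, rfl⟩ : ∃ j, n = s + j := Nat.exists_eq_add_of_le (mem_Icc.mp hs).2
      rw [show s + j + 3 - s = j + 2 + 1 by omega, show s + j + 2 - s = j + 2 by omega,
        show j + 2 + 1 - 2 = j + 1 by omega, show j + 2 - 2 = j by omega]
      ring
    rw [sum_congr rfl hterm, sum_neg_distrib]
    norm_num
    ring
  simp only [eulerLucasCoeff, show n + 3 - 1 = n + 2 by omega, show n + 3 - 2 = n + 1 by omega,
    show n + 2 - 1 = n + 1 by omega, show n + 2 - 2 = n by omega, hsum]
  ring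

theorem sub_lucasSeq_eq_lucasConv {E : ℕ → ℝ} (h0 : E 0 = 1) (h1 : E 1 = -1 / 2) (n : ℕ)
    (hn : 1 ≤ n) :
    E n - ((lucasSeq (n + 1) : ℝ) - 7 / 2 * lucasSeq n) = lucasConv (eulerLucasCoeff E) n := by
  obtain ⟨m, rfl⟩ := Nat.exists_eq_add_of_le' hn
  clear hn
  induction m using Nat.twoStepInduction with
  | zero => norm_num [lucasConv, lucasSeq, h1]
  | one =>
    norm_num [lucasConv, eulerLucasCoeff, lucasSeq, h0, h1]
    ring
  | more m ih₁ ih₂ =>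
    simp only [Nat.add_assoc, Nat.reduceAdd] at ih₁ ih₂ ⊢
    have hconv := lucasConv_add_three (eulerLucasCoeff E) m
    have hcoeff := eulerLucasCoeff_add_three E m
    have hL₄ : (lucasSeq (m + 4) : ℝ) = lucasSeq (m + 3) + lucasSeq (m + 2) :=
      lucasSeq_add_two (m + 2)
    have hL₃ : (lucasSeq (m + 3) : ℝ) = lucasSeq (m + 2) + lucasSeq (m + 1) :=
      lucasSeq_add_two (m + 1)
    linear_combination ih₁ + ih₂ - hconv - hcoeff - hL₄ + 7 / 2 * hL₃

theorem euler_number_lucas_identity (Eu : ℝ → ℕ → ℝ) (hEu : IsEulerFamily Eu)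
    (n : ℕ) (hn : 2 ≤ n) :
    Eu 0 n - ((lucasSeq (n + 1) : ℝ) - 7 / 2 * (lucasSeq n : ℝ))
      = ∑ k ∈ Finset.Icc 2 n,
          (Eu 0 k - 3 * Eu 0 (k - 1)
            + 5 * ∑ s ∈ Finset.Icc 0 (k - 2),
                (-1 : ℝ) ^ (k - s) * 2 ^ (k - s - 2) * Eu 0 s) *
            (lucasSeq (n - k + 1) : ℝ) :=
  sub_lucasSeq_eq_lucasConv (hEu.apply_zero 0) ((hEu.apply_one 0).trans (by norm_num)) n (by omega)
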